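/- (Existence of Nash equilibria in the EWL protocol.) For any real payoff matrices (a_{ij})_{i,j∈{0,1}} and (b_{ij})_{i,j∈{0,1}} and any entanglement parameter γ ∈ [0,π/2], define f_A(U_A,U_B) := Σ_{i,j} a_{ij} |⟨ij|J(γ)†(U_A⊗U_B)J(γ)|00⟩|² and f_B(U_A,U_B) := Σ_{i,j} b_{ij} |⟨ij|J(γ)†(U_A⊗U_B)J(γ)|00⟩|². Then there exists a pair (μ_A*, μ_B*) ∈ 𝒫(SU(2))² such that ∬ f_A dμ_A dμ_B* ≤ ∬ f_A dμ_A* dμ_B* for every μ_A ∈ 𝒫(SU(2)) and ∬ f_B dμ_A* dμ_B ≤ ∬ f_B dμ_A* dμ_B* for every μ_B ∈ 𝒫(SU(2)). -/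

import Mathlib

open Complex Real Matrix Kronecker MeasureTheory

/-- The group SU(2) of 2×2 complex unitary matrices of determinant 1. -/
abbrev SU2 := Matrix.specialUnitaryGroup (Fin 2) ℂ

/-- The Pauli matrix σx. -/
def sigmaX : Matrix (Fin 2) (Fin 2) ℂ := !![0, 1; 1, 0]

/-- The EWL entangling operator `J(γ) = cos(γ/2)·(I⊗I) + i·sin(γ/2)·(σx⊗σx)`. -/
noncomputable def Jmat (γ : ℝ) : Matrix (Fin 2 × Fin 2) (Fin 2 × Fin 2) ℂ :=
  (Real.cos (γ / 2) : ℂ) • ((1 : Matrix (Fin 2) (Fin 2) ℂ) ⊗ₖ (1 : Matrix (Fin 2) (Fin 2) ℂ))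
    + (Complex.I * Real.sin (γ / 2)) • (sigmaX ⊗ₖ sigmaX)

/-- The basis state `|ij⟩ = |i⟩⊗|j⟩` of `ℂ²⊗ℂ² ≅ ℂ⁴`. -/
def ket (i j : Fin 2) : Fin 2 × Fin 2 → ℂ := fun p => if p = (i, j) then 1 else 0

/-- The Hermitian inner product `⟨v|w⟩` on `ℂ⁴`. -/
noncomputable def braket (v w : Fin 2 × Fin 2 → ℂ) : ℂ := ∑ p, (starRingEnd ℂ) (v p) * w p

/-- The EWL amplitude `⟨ij| J(γ)† (U_A⊗U_B) J(γ) |00⟩`. -/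
noncomputable def amp (γ : ℝ) (UA UB : Matrix (Fin 2) (Fin 2) ℂ) (i j : Fin 2) : ℂ :=
  braket (ket i j) ((Jmat γ)ᴴ *ᵥ ((UA ⊗ₖ UB) *ᵥ (Jmat γ *ᵥ ket 0 0)))

/-- The EWL expected payoff for payoff matrix `x` and pure strategies `U_A, U_B ∈ SU(2)`. -/
noncomputable def ewlPayoff (γ : ℝ) (x : Fin 2 → Fin 2 → ℝ) (UA UB : SU2) : ℝ :=
  ∑ i, ∑ j, x i j *
    ‖amp γ (UA : Matrix (Fin 2) (Fin 2) ℂ) (UB : Matrix (Fin 2) (Fin 2) ℂ) i j‖ ^ 2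

noncomputable instance : MeasurableSpace SU2 := borel SU2
instance : BorelSpace SU2 := ⟨rfl⟩

lemma amp_eq (c s : ℝ) (γ : ℝ) (hc : Real.cos (γ/2) = c) (hs : Real.sin (γ/2) = s)
    (A B : Matrix (Fin 2) (Fin 2) ℂ) (i j : Fin 2) :
    amp γ A B i j = (c:ℂ)^2 * A i 0 * B j 0 + (s:ℂ)^2 * A (1-i) 1 * B (1-j) 1
      + Complex.I * c * s * (A i 1 * B j 1 - A (1-i) 0 * B (1-j) 0) := by
  fin_cases i <;> fin_cases j <;>
  · simp [amp, braket, ket, Jmat, hc, hs, Matrix.mulVec, dotProduct, Fintype.sum_prod_type,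
      Fin.sum_univ_two, Matrix.conjTranspose_apply, Matrix.kroneckerMap_apply, sigmaX,
      Matrix.one_apply, Complex.conj_ofReal, Prod.ext_iff]
    ring_nf
    simp [Complex.I_sq]

-- the four pure strategies
def W1 : Matrix (Fin 2) (Fin 2) ℂ := !![1, 0; 0, 1]
def Wz : Matrix (Fin 2) (Fin 2) ℂ := !![Complex.I, 0; 0, -Complex.I]
def Wx : Matrix (Fin 2) (Fin 2) ℂ := !![0, Complex.I; Complex.I, 0]
def Wy : Matrix (Fin 2) (Fin 2) ℂ := !![0, 1; -1, 0]

lemma W1_mem : W1 ∈ Matrix.specialUnitaryGroup (Fin 2) ℂ := by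
  rw [Matrix.mem_specialUnitaryGroup_iff]
  constructor
  · rw [Matrix.mem_unitaryGroup_iff]
    ext i j
    fin_cases i <;> fin_cases j <;>
      simp [W1, Matrix.mul_apply, Fin.sum_univ_two, Matrix.one_apply, star, Matrix.conjTranspose_apply, Complex.ext_iff]
  · simp [W1, Matrix.det_fin_two]

lemma Wz_mem : Wz ∈ Matrix.specialUnitaryGroup (Fin 2) ℂ := by
  rw [Matrix.mem_specialUnitaryGroup_iff]
  refine ⟨Matrix.mem_unitaryGroup_iff.2 ?_, ?_⟩
  · ext i j
    fin_cases i <;> fin_cases j <;>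
      simp [Wz, Matrix.mul_apply, Fin.sum_univ_two, Matrix.one_apply, star,
        Matrix.conjTranspose_apply, Complex.ext_iff]
  · simp [Wz, Matrix.det_fin_two]

lemma Wx_mem : Wx ∈ Matrix.specialUnitaryGroup (Fin 2) ℂ := by
  rw [Matrix.mem_specialUnitaryGroup_iff]
  refine ⟨Matrix.mem_unitaryGroup_iff.2 ?_, ?_⟩
  · ext i j
    fin_cases i <;> fin_cases j <;>
      simp [Wx, Matrix.mul_apply, Fin.sum_univ_two, Matrix.one_apply, star,
        Matrix.conjTranspose_apply, Complex.ext_iff]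
  · simp [Wx, Matrix.det_fin_two]

lemma Wy_mem : Wy ∈ Matrix.specialUnitaryGroup (Fin 2) ℂ := by
  rw [Matrix.mem_specialUnitaryGroup_iff]
  refine ⟨Matrix.mem_unitaryGroup_iff.2 ?_, ?_⟩
  · ext i j
    fin_cases i <;> fin_cases j <;>
      simp [Wy, Matrix.mul_apply, Fin.sum_univ_two, Matrix.one_apply, star,
        Matrix.conjTranspose_apply, Complex.ext_iff]
  · simp [Wy, Matrix.det_fin_two]

noncomputable def V1 : SU2 := ⟨W1, W1_mem⟩
noncomputable def Vz : SU2 := ⟨Wz, Wz_mem⟩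
noncomputable def Vx : SU2 := ⟨Wx, Wx_mem⟩
noncomputable def Vy : SU2 := ⟨Wy, Wy_mem⟩

open Complex (normSq)

lemma payoffD_raw (c s γ : ℝ) (hc : Real.cos (γ/2) = c) (hs : Real.sin (γ/2) = s)
    (x : Fin 2 → Fin 2 → ℝ) (U : SU2) :
    ewlPayoff γ x U V1 + ewlPayoff γ x U Vz =
    2*(x 0 0*(c^4 * normSq (U.1 0 0) + s^4 * normSq (U.1 1 1))
     + x 0 1*c^2*s^2*(normSq (U.1 0 1) + normSq (U.1 1 0))
     + x 1 0*(c^4 * normSq (U.1 1 0) + s^4 * normSq (U.1 0 1))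
     + x 1 1*c^2*s^2*(normSq (U.1 1 1) + normSq (U.1 0 0))) := by
  have h10 : (1-0 : Fin 2) = 1 := rfl
  have h11 : (1-1 : Fin 2) = 0 := rfl
  simp only [ewlPayoff, Fin.sum_univ_two, amp_eq c s γ hc hs, h10, h11, Complex.sq_norm]
  simp [V1, Vz, W1, Wz, Complex.normSq_apply, Complex.add_re, Complex.add_im, Complex.mul_re,
    Complex.mul_im, Complex.sub_re, Complex.sub_im, Complex.I_re, Complex.I_im,
    Complex.ofReal_re, Complex.ofReal_im, Complex.neg_re, Complex.neg_im, ← Complex.ofReal_pow]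
  ring

lemma payoffX_raw (c s γ : ℝ) (hc : Real.cos (γ/2) = c) (hs : Real.sin (γ/2) = s)
    (x : Fin 2 → Fin 2 → ℝ) (U : SU2) :
    ewlPayoff γ x U Vx + ewlPayoff γ x U Vy =
    2*(x 0 0*c^2*s^2*(normSq (U.1 0 1) + normSq (U.1 1 0))
     + x 0 1*(c^4 * normSq (U.1 0 0) + s^4 * normSq (U.1 1 1))
     + x 1 0*c^2*s^2*(normSq (U.1 1 1) + normSq (U.1 0 0))
     + x 1 1*(c^4 * normSq (U.1 1 0) + s^4 * normSq (U.1 0 1))) := by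
  have h10 : (1-0 : Fin 2) = 1 := rfl
  have h11 : (1-1 : Fin 2) = 0 := rfl
  simp only [ewlPayoff, Fin.sum_univ_two, amp_eq c s γ hc hs, h10, h11, Complex.sq_norm]
  simp [Vx, Vy, Wx, Wy, Complex.normSq_apply, Complex.add_re, Complex.add_im, Complex.mul_re,
    Complex.mul_im, Complex.sub_re, Complex.sub_im, Complex.I_re, Complex.I_im,
    Complex.ofReal_re, Complex.ofReal_im, Complex.neg_re, Complex.neg_im, ← Complex.ofReal_pow]
  ring

lemma payoffDB_raw (c s γ : ℝ) (hc : Real.cos (γ/2) = c) (hs : Real.sin (γ/2) = s)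
    (x : Fin 2 → Fin 2 → ℝ) (U : SU2) :
    ewlPayoff γ x V1 U + ewlPayoff γ x Vz U =
    2*(x 0 0*(c^4 * normSq (U.1 0 0) + s^4 * normSq (U.1 1 1))
     + x 0 1*(c^4 * normSq (U.1 1 0) + s^4 * normSq (U.1 0 1))
     + x 1 0*c^2*s^2*(normSq (U.1 0 1) + normSq (U.1 1 0))
     + x 1 1*c^2*s^2*(normSq (U.1 1 1) + normSq (U.1 0 0))) := by
  have h10 : (1-0 : Fin 2) = 1 := rfl
  have h11 : (1-1 : Fin 2) = 0 := rfl
  simp only [ewlPayoff, Fin.sum_univ_two, amp_eq c s γ hc hs, h10, h11, Complex.sq_norm]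
  simp [V1, Vz, W1, Wz, Complex.normSq_apply, Complex.add_re, Complex.add_im, Complex.mul_re,
    Complex.mul_im, Complex.sub_re, Complex.sub_im, Complex.I_re, Complex.I_im,
    Complex.ofReal_re, Complex.ofReal_im, Complex.neg_re, Complex.neg_im, ← Complex.ofReal_pow]
  ring

lemma payoffXB_raw (c s γ : ℝ) (hc : Real.cos (γ/2) = c) (hs : Real.sin (γ/2) = s)
    (x : Fin 2 → Fin 2 → ℝ) (U : SU2) :
    ewlPayoff γ x Vx U + ewlPayoff γ x Vy U =
    2*(x 0 0*c^2*s^2*(normSq (U.1 0 1) + normSq (U.1 1 0))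
     + x 0 1*c^2*s^2*(normSq (U.1 1 1) + normSq (U.1 0 0))
     + x 1 0*(c^4 * normSq (U.1 0 0) + s^4 * normSq (U.1 1 1))
     + x 1 1*(c^4 * normSq (U.1 1 0) + s^4 * normSq (U.1 0 1))) := by
  have h10 : (1-0 : Fin 2) = 1 := rfl
  have h11 : (1-1 : Fin 2) = 0 := rfl
  simp only [ewlPayoff, Fin.sum_univ_two, amp_eq c s γ hc hs, h10, h11, Complex.sq_norm]
  simp [Vx, Vy, Wx, Wy, Complex.normSq_apply, Complex.add_re, Complex.add_im, Complex.mul_re,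
    Complex.mul_im, Complex.sub_re, Complex.sub_im, Complex.I_re, Complex.I_im,
    Complex.ofReal_re, Complex.ofReal_im, Complex.neg_re, Complex.neg_im, ← Complex.ofReal_pow]
  ring

noncomputable def tpar (U : SU2) : ℝ := normSq (U.1 0 0)

lemma nsq_entries (U : SU2) : normSq (U.1 1 1) = tpar U ∧ normSq (U.1 0 1) = 1 - tpar U ∧
    normSq (U.1 1 0) = 1 - tpar U := by
  obtain ⟨hU, -⟩ := Matrix.mem_specialUnitaryGroup_iff.mp U.2
  have h1 : (star U.1 * U.1) 0 0 = 1 := by rw [hU.1]; simp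
  have h2 : (star U.1 * U.1) 1 1 = 1 := by rw [hU.1]; simp
  have h3 : (U.1 * star U.1) 0 0 = 1 := by rw [hU.2]; simp
  simp only [Matrix.mul_apply, Fin.sum_univ_two, Matrix.star_apply, Matrix.conjTranspose_apply,
    Complex.star_def, Complex.mul_conj, ← Complex.normSq_eq_conj_mul_self] at h1 h2 h3
  have e1 : normSq (U.1 0 0) + normSq (U.1 1 0) = 1 := by exact_mod_cast h1
  have e2 : normSq (U.1 0 1) + normSq (U.1 1 1) = 1 := by exact_mod_cast h2
  have e3 : normSq (U.1 0 0) + normSq (U.1 0 1) = 1 := by exact_mod_cast h3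
  unfold tpar
  refine ⟨by linarith, by linarith, by linarith⟩

lemma tpar_mem (U : SU2) : 0 ≤ tpar U ∧ tpar U ≤ 1 := by
  have h := (nsq_entries U).2.2
  have h2 := Complex.normSq_nonneg (U.1 1 0)
  have h3 := Complex.normSq_nonneg (U.1 0 0)
  exact ⟨h3, by unfold tpar at *; linarith⟩

instance : MeasurableSingletonClass SU2 :=
  ⟨fun a => isClosed_singleton.measurableSet⟩

lemma meas_amp (γ : ℝ) (W : SU2) (i j : Fin 2) :
    Measurable (fun V : SU2 => amp γ (W : Matrix (Fin 2) (Fin 2) ℂ)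
      (V : Matrix (Fin 2) (Fin 2) ℂ) i j) := by
  have hc : ∀ i j : Fin 2, Continuous (fun V : SU2 => (V : Matrix (Fin 2) (Fin 2) ℂ) i j) :=
    fun i j => (continuous_apply j).comp ((continuous_apply i).comp continuous_subtype_val)
  have hm : ∀ i j : Fin 2, Measurable (fun V : SU2 => (V : Matrix (Fin 2) (Fin 2) ℂ) i j) :=
    fun i j => (hc i j).measurable
  simp only [amp_eq _ _ γ rfl rfl]
  exact (((hm _ _).const_mul _).add ((hm _ _).const_mul _)).add
    ((((hm _ _).const_mul _).sub ((hm _ _).const_mul _)).const_mul _)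

lemma meas_right (γ : ℝ) (x : Fin 2 → Fin 2 → ℝ) (W : SU2) :
    Measurable (fun V : SU2 => ewlPayoff γ x W V) := by
  have habs : Measurable (fun z : ℂ => ‖z‖) := continuous_norm.measurable
  simp only [ewlPayoff, Fin.sum_univ_two]
  exact ((((habs.comp (meas_amp γ W 0 0)).pow_const 2).const_mul _).add
      (((habs.comp (meas_amp γ W 0 1)).pow_const 2).const_mul _)).add
    ((((habs.comp (meas_amp γ W 1 0)).pow_const 2).const_mul _).add
      (((habs.comp (meas_amp γ W 1 1)).pow_const 2).const_mul _))

lemma nsq_le_one (U : SU2) (i j : Fin 2) : normSq (U.1 i j) ≤ 1 := by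
  obtain ⟨h11, h01, h10⟩ := nsq_entries U
  obtain ⟨ht0, ht1⟩ := tpar_mem U
  fin_cases i <;> fin_cases j
  · exact ht1
  · show normSq (U.1 0 1) ≤ 1; rw [h01]; linarith
  · show normSq (U.1 1 0) ≤ 1; rw [h10]; linarith
  · show normSq (U.1 1 1) ≤ 1; rw [h11]; linarith

lemma abs_entry_le (U : SU2) (i j : Fin 2) : ‖U.1 i j‖ ≤ 1 := by
  rw [Complex.norm_def]
  calc Real.sqrt (normSq (U.1 i j)) ≤ Real.sqrt 1 :=
        Real.sqrt_le_sqrt (nsq_le_one U i j)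
    _ = 1 := Real.sqrt_one

lemma abs_amp_le (γ : ℝ) (U V : SU2) (i j : Fin 2) :
    ‖amp γ (U : Matrix (Fin 2) (Fin 2) ℂ) (V : Matrix (Fin 2) (Fin 2) ℂ) i j‖ ≤ 4 := by
  rw [amp_eq _ _ γ rfl rfl]
  have hprod : ∀ (r : ℝ) (z w : ℂ), |r| ≤ 1 → ‖z‖ ≤ 1 → ‖w‖ ≤ 1 →
      ‖(r:ℂ)^2 * z * w‖ ≤ 1 := by
    intro r z w hr hz hw
    rw [norm_mul, norm_mul, norm_pow, Complex.norm_real, Real.norm_eq_abs]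
    have h1 : |r|^2 ≤ 1 := by nlinarith [abs_nonneg r]
    have hz0 := norm_nonneg z
    have hw0 := norm_nonneg w
    have ha2 : (0:ℝ) ≤ |r|^2 := by positivity
    have s1 : |r|^2 * ‖z‖ ≤ 1 := by nlinarith
    have s1' : 0 ≤ |r|^2 * ‖z‖ := mul_nonneg ha2 hz0
    nlinarith
  have h1 := hprod (Real.cos (γ/2)) (U.1 i 0) (V.1 j 0) (Real.abs_cos_le_one _)
    (abs_entry_le U i 0) (abs_entry_le V j 0)
  have h2 := hprod (Real.sin (γ/2)) (U.1 (1-i) 1) (V.1 (1-j) 1) (Real.abs_sin_le_one _)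
    (abs_entry_le U (1-i) 1) (abs_entry_le V (1-j) 1)
  have h3 : ‖Complex.I * (Real.cos (γ/2)) * (Real.sin (γ/2)) *
      (U.1 i 1 * V.1 j 1 - U.1 (1-i) 0 * V.1 (1-j) 0)‖ ≤ 2 := by
    rw [norm_mul]
    have ha : ‖Complex.I * (Real.cos (γ/2)) * (Real.sin (γ/2))‖ ≤ 1 := by
      rw [norm_mul, norm_mul, Complex.norm_I, Complex.norm_real, Real.norm_eq_abs, Complex.norm_real, Real.norm_eq_abs, one_mul]
      have := Real.abs_cos_le_one (γ/2)
      have := Real.abs_sin_le_one (γ/2)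
      nlinarith [abs_nonneg (Real.cos (γ/2)), abs_nonneg (Real.sin (γ/2))]
    have hb : ‖U.1 i 1 * V.1 j 1 - U.1 (1-i) 0 * V.1 (1-j) 0‖ ≤ 2 := by
      calc ‖U.1 i 1 * V.1 j 1 - U.1 (1-i) 0 * V.1 (1-j) 0‖
          ≤ ‖U.1 i 1 * V.1 j 1‖ + ‖U.1 (1-i) 0 * V.1 (1-j) 0‖ := by
            simpa [sub_eq_add_neg] using
              norm_add_le (U.1 i 1 * V.1 j 1) (-(U.1 (1-i) 0 * V.1 (1-j) 0))
        _ ≤ 2 := by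
            rw [norm_mul, norm_mul]
            have := abs_entry_le U i 1
            have := abs_entry_le V j 1
            have := abs_entry_le U (1-i) 0
            have := abs_entry_le V (1-j) 0
            nlinarith [norm_nonneg (U.1 i 1), norm_nonneg (V.1 j 1),
              norm_nonneg (U.1 (1-i) 0), norm_nonneg (V.1 (1-j) 0)]
    nlinarith [norm_nonneg (Complex.I * (Real.cos (γ/2)) * (Real.sin (γ/2))),
      norm_nonneg (U.1 i 1 * V.1 j 1 - U.1 (1-i) 0 * V.1 (1-j) 0)]
  calc ‖_ + _ + _‖ ≤ ‖_ + _‖ + _ := norm_add_le _ _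
    _ ≤ _ := by
        have := norm_add_le ((Real.cos (γ/2) : ℂ)^2 * U.1 i 0 * V.1 j 0)
          ((Real.sin (γ/2) : ℂ)^2 * U.1 (1-i) 1 * V.1 (1-j) 1)
        linarith

lemma ewl_bound (γ : ℝ) (x : Fin 2 → Fin 2 → ℝ) (U V : SU2) :
    |ewlPayoff γ x U V| ≤ 16 * (|x 0 0| + |x 0 1| + |x 1 0| + |x 1 1|) := by
  have key : ∀ (i j : Fin 2),
      x i j * ‖amp γ (U : Matrix (Fin 2) (Fin 2) ℂ)
        (V : Matrix (Fin 2) (Fin 2) ℂ) i j‖ ^ 2 ≤ |x i j| * 16 ∧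
      -(|x i j| * 16) ≤ x i j * ‖amp γ (U : Matrix (Fin 2) (Fin 2) ℂ)
        (V : Matrix (Fin 2) (Fin 2) ℂ) i j‖ ^ 2 := by
    intro i j
    have h4 := abs_amp_le γ U V i j
    have h0 := norm_nonneg (amp γ (U : Matrix (Fin 2) (Fin 2) ℂ)
      (V : Matrix (Fin 2) (Fin 2) ℂ) i j)
    have hA2 : ‖amp γ (U : Matrix (Fin 2) (Fin 2) ℂ)
        (V : Matrix (Fin 2) (Fin 2) ℂ) i j‖ ^ 2 ≤ 16 := by nlinarith
    have hA0 : (0:ℝ) ≤ ‖amp γ (U : Matrix (Fin 2) (Fin 2) ℂ)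
        (V : Matrix (Fin 2) (Fin 2) ℂ) i j‖ ^ 2 := by positivity
    constructor
    · nlinarith [mul_nonneg (sub_nonneg.2 (le_abs_self (x i j))) hA0,
        mul_nonneg (abs_nonneg (x i j)) (sub_nonneg.2 hA2)]
    · nlinarith [mul_nonneg (sub_nonneg.2 (neg_le_abs (x i j))) hA0,
        mul_nonneg (abs_nonneg (x i j)) (sub_nonneg.2 hA2)]
  rw [abs_le]
  constructor <;>
  · simp only [ewlPayoff, Fin.sum_univ_two]
    linarith [(key 0 0).1, (key 0 1).1, (key 1 0).1, (key 1 1).1,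
      (key 0 0).2, (key 0 1).2, (key 1 0).2, (key 1 1).2]

noncomputable def mm (t : ℝ) : Measure SU2 :=
  (ENNReal.ofReal (t/2)) • Measure.dirac V1 + (ENNReal.ofReal (t/2)) • Measure.dirac Vz
  + ((ENNReal.ofReal ((1-t)/2)) • Measure.dirac Vx + (ENNReal.ofReal ((1-t)/2)) • Measure.dirac Vy)

lemma mm_prob (t : ℝ) (h0 : 0 ≤ t) (h1 : t ≤ 1) : IsProbabilityMeasure (mm t) := by
  constructor
  simp only [mm, Measure.add_apply, Measure.smul_apply, Measure.dirac_apply' _ MeasurableSet.univ,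
    Set.mem_univ, Set.indicator_of_mem, smul_eq_mul, mul_one, Pi.one_apply]
  rw [← ENNReal.ofReal_add (by linarith) (by linarith), ← ENNReal.ofReal_add (by linarith) (by linarith),
    ← ENNReal.ofReal_add (by positivity) (by linarith)]
  norm_num

lemma integrable_dirac_any (f : SU2 → ℝ) (x : SU2) : Integrable f (Measure.dirac x) :=
  (integrable_congr (MeasureTheory.ae_eq_dirac f)).mpr (integrable_const _)

lemma integrable_mm (f : SU2 → ℝ) (t : ℝ) : Integrable f (mm t) := by
  unfold mm
  exact (((integrable_dirac_any f V1).smul_measure ENNReal.ofReal_ne_top).add_measure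
      ((integrable_dirac_any f Vz).smul_measure ENNReal.ofReal_ne_top)).add_measure
    (((integrable_dirac_any f Vx).smul_measure ENNReal.ofReal_ne_top).add_measure
      ((integrable_dirac_any f Vy).smul_measure ENNReal.ofReal_ne_top))

lemma integral_mm (f : SU2 → ℝ) (t : ℝ) (h0 : 0 ≤ t) (h1 : t ≤ 1) :
    ∫ u, f u ∂(mm t) = t/2 * f V1 + t/2 * f Vz + ((1-t)/2 * f Vx + (1-t)/2 * f Vy) := by
  unfold mm
  rw [integral_add_measure
      (((integrable_dirac_any f V1).smul_measure ENNReal.ofReal_ne_top).add_measure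
        ((integrable_dirac_any f Vz).smul_measure ENNReal.ofReal_ne_top))
      (((integrable_dirac_any f Vx).smul_measure ENNReal.ofReal_ne_top).add_measure
        ((integrable_dirac_any f Vy).smul_measure ENNReal.ofReal_ne_top)),
    integral_add_measure ((integrable_dirac_any f V1).smul_measure ENNReal.ofReal_ne_top)
      ((integrable_dirac_any f Vz).smul_measure ENNReal.ofReal_ne_top),
    integral_add_measure ((integrable_dirac_any f Vx).smul_measure ENNReal.ofReal_ne_top)
      ((integrable_dirac_any f Vy).smul_measure ENNReal.ofReal_ne_top),
    integral_smul_measure, integral_smul_measure, integral_smul_measure, integral_smul_measure,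
    integral_dirac, integral_dirac, integral_dirac, integral_dirac,
    ENNReal.toReal_ofReal (by linarith : (0:ℝ) ≤ t/2), ENNReal.toReal_ofReal (by linarith : (0:ℝ) ≤ (1-t)/2)]
  simp [smul_eq_mul]

lemma tpar_V1 : tpar V1 = 1 := by simp [tpar, V1, W1]
lemma tpar_Vz : tpar Vz = 1 := by simp [tpar, Vz, Wz]
lemma tpar_Vx : tpar Vx = 0 := by simp [tpar, Vx, Wx]
lemma tpar_Vy : tpar Vy = 0 := by simp [tpar, Vy, Wy]

lemma meas_tpar : Measurable tpar := by
  have hc : Continuous (fun V : SU2 => (V : Matrix (Fin 2) (Fin 2) ℂ) 0 0) :=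
    (continuous_apply 0).comp ((continuous_apply 0).comp continuous_subtype_val)
  exact Complex.continuous_normSq.measurable.comp hc.measurable

lemma integrable_affine_tpar (A B : ℝ) (μ : Measure SU2) [IsProbabilityMeasure μ] :
    Integrable (fun U => tpar U * A + (1 - tpar U) * B) μ := by
  refine Integrable.mono' (integrable_const (|A| + |B|))
    (((meas_tpar.mul_const A).add ((measurable_const.sub meas_tpar).mul_const B)).aestronglyMeasurable)
    (Filter.Eventually.of_forall fun U => ?_)
  obtain ⟨h0, h1⟩ := tpar_mem U
  rw [Real.norm_eq_abs, abs_le]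
  constructor
  · nlinarith [le_abs_self A, le_abs_self B, neg_abs_le A, neg_abs_le B, abs_nonneg A, abs_nonneg B]
  · nlinarith [le_abs_self A, le_abs_self B, neg_abs_le A, neg_abs_le B, abs_nonneg A, abs_nonneg B]


lemma pick_br (g0 g1 q : ℝ) :
    ∃ t, 0 ≤ t ∧ t ≤ 1 ∧ ∀ t', 0 ≤ t' → t' ≤ 1 →
      t' * (q*g1 + (1-q)*g0) ≤ t * (q*g1 + (1-q)*g0) := by
  rcases le_total 0 (q*g1 + (1-q)*g0) with h | h
  · exact ⟨1, by norm_num, le_refl 1, fun t' h0 h1 => by nlinarith⟩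
  · exact ⟨0, le_refl 0, by norm_num, fun t' h0 h1 => by nlinarith⟩

lemma nash_core (g0 g1 h0 h1 : ℝ) : ∃ t q : ℝ, 0 ≤ t ∧ t ≤ 1 ∧ 0 ≤ q ∧ q ≤ 1 ∧
    (∀ t', 0 ≤ t' → t' ≤ 1 → t' * (q*g1 + (1-q)*g0) ≤ t * (q*g1 + (1-q)*g0)) ∧
    (∀ q', 0 ≤ q' → q' ≤ 1 → q' * (t*h1 + (1-t)*h0) ≤ q * (t*h1 + (1-t)*h0)) := by
  by_cases hg : (0 ≤ g0 ∧ 0 ≤ g1) ∨ (g0 ≤ 0 ∧ g1 ≤ 0)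
  · -- t ∈ {0,1} is a best response to every q
    obtain ⟨t, ht0, ht1, htbr⟩ :
        ∃ t, 0 ≤ t ∧ t ≤ 1 ∧ ∀ q t', 0 ≤ q → q ≤ 1 → 0 ≤ t' → t' ≤ 1 →
          t' * (q*g1 + (1-q)*g0) ≤ t * (q*g1 + (1-q)*g0) := by
      rcases hg with ⟨hg0, hg1⟩ | ⟨hg0, hg1⟩
      · exact ⟨1, by norm_num, le_refl 1, fun q t' hq0 hq1 h0' h1' => by
          nlinarith [mul_nonneg (mul_nonneg (sub_nonneg.2 h1') hq0) hg1,
            mul_nonneg (mul_nonneg (sub_nonneg.2 h1') (sub_nonneg.2 hq1)) hg0]⟩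
      · exact ⟨0, le_refl 0, by norm_num, fun q t' hq0 hq1 h0' h1' => by
          nlinarith [mul_nonneg (mul_nonneg h0' hq0) (neg_nonneg.2 hg1),
            mul_nonneg (mul_nonneg h0' (sub_nonneg.2 hq1)) (neg_nonneg.2 hg0)]⟩
    obtain ⟨q, hq0, hq1, hqbr⟩ := pick_br h0 h1 t
    exact ⟨t, q, ht0, ht1, hq0, hq1, fun t' => htbr q t' hq0 hq1, hqbr⟩
  · by_cases hh : (0 ≤ h0 ∧ 0 ≤ h1) ∨ (h0 ≤ 0 ∧ h1 ≤ 0)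
    · obtain ⟨q, hq0, hq1, hqbr⟩ :
          ∃ q, 0 ≤ q ∧ q ≤ 1 ∧ ∀ t q', 0 ≤ t → t ≤ 1 → 0 ≤ q' → q' ≤ 1 →
            q' * (t*h1 + (1-t)*h0) ≤ q * (t*h1 + (1-t)*h0) := by
        rcases hh with ⟨hh0, hh1⟩ | ⟨hh0, hh1⟩
        · exact ⟨1, by norm_num, le_refl 1, fun t q' ht0 ht1 h0' h1' => by
            nlinarith [mul_nonneg (mul_nonneg (sub_nonneg.2 h1') ht0) hh1,
              mul_nonneg (mul_nonneg (sub_nonneg.2 h1') (sub_nonneg.2 ht1)) hh0]⟩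
        · exact ⟨0, le_refl 0, by norm_num, fun t q' ht0 ht1 h0' h1' => by
            nlinarith [mul_nonneg (mul_nonneg h0' ht0) (neg_nonneg.2 hh1),
              mul_nonneg (mul_nonneg h0' (sub_nonneg.2 ht1)) (neg_nonneg.2 hh0)]⟩
      obtain ⟨t, ht0, ht1, htbr⟩ := pick_br g0 g1 q
      exact ⟨t, q, ht0, ht1, hq0, hq1, htbr, fun q' => hqbr t q' ht0 ht1⟩
    · -- both strictly mixed
      have hgm : (0 < g0 ∧ g1 < 0) ∨ (g0 < 0 ∧ 0 < g1) := by
        rcases le_or_gt 0 g0 with h | h <;> rcases le_or_gt 0 g1 with h' | h'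
        · exact absurd (Or.inl ⟨h, h'⟩) hg
        · rcases h.lt_or_eq with h'' | h''
          · exact Or.inl ⟨h'', h'⟩
          · exact absurd (Or.inr ⟨le_of_eq h''.symm, le_of_lt h'⟩) hg
        · exact Or.inr ⟨h, h'.lt_of_ne (by rintro rfl; exact hg (Or.inr ⟨le_of_lt h, le_refl 0⟩))⟩
        · exact absurd (Or.inr ⟨le_of_lt h, le_of_lt h'⟩) hg
      have hhm : (0 < h0 ∧ h1 < 0) ∨ (h0 < 0 ∧ 0 < h1) := by
        rcases le_or_gt 0 h0 with h | h <;> rcases le_or_gt 0 h1 with h' | h'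
        · exact absurd (Or.inl ⟨h, h'⟩) hh
        · rcases h.lt_or_eq with h'' | h''
          · exact Or.inl ⟨h'', h'⟩
          · exact absurd (Or.inr ⟨le_of_eq h''.symm, le_of_lt h'⟩) hh
        · exact Or.inr ⟨h, h'.lt_of_ne (by rintro rfl; exact hh (Or.inr ⟨le_of_lt h, le_refl 0⟩))⟩
        · exact absurd (Or.inr ⟨le_of_lt h, le_of_lt h'⟩) hh
      have key : ∀ w0 w1 : ℝ, (0 < w0 ∧ w1 < 0) ∨ (w0 < 0 ∧ 0 < w1) →
          0 ≤ w0/(w0-w1) ∧ w0/(w0-w1) ≤ 1 ∧ (w0/(w0-w1))*w1 + (1-w0/(w0-w1))*w0 = 0 := by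
        rintro w0 w1 (⟨hw0, hw1⟩ | ⟨hw0, hw1⟩)
        · have hd : 0 < w0 - w1 := by linarith
          refine ⟨div_nonneg (le_of_lt hw0) (le_of_lt hd), (div_le_one hd).mpr (by linarith), ?_⟩
          field_simp
          ring
        · have hd : w0 - w1 < 0 := by linarith
          have hd' : w0 - w1 ≠ 0 := ne_of_lt hd
          refine ⟨le_of_lt (div_pos_of_neg_of_neg hw0 hd), ?_, ?_⟩
          · rw [div_le_one_iff]
            exact Or.inr (Or.inr ⟨hd, by linarith⟩)
          · field_simp
            ring
      obtain ⟨hq0, hq1, hgz⟩ := key g0 g1 hgm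
      obtain ⟨ht0, ht1, hhz⟩ := key h0 h1 hhm
      refine ⟨h0/(h0-h1), g0/(g0-g1), ht0, ht1, hq0, hq1, ?_, ?_⟩
      · intro t' _ _
        have : (g0/(g0-g1))*g1 + (1-g0/(g0-g1))*g0 = 0 := hgz
        rw [this]; simp
      · intro q' _ _
        have : (h0/(h0-h1))*h1 + (1-h0/(h0-h1))*h0 = 0 := hhz
        rw [this]; simp


/-- The expected payoff of a pair of quantum mixed strategies in the EWL protocol. -/
noncomputable def mixedPayoff (γ : ℝ) (x : Fin 2 → Fin 2 → ℝ)
    (μ ν : ProbabilityMeasure SU2) : ℝ :=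
  ∫ UA, ∫ UB, ewlPayoff γ x UA UB ∂(ν : Measure SU2) ∂(μ : Measure SU2)

set_option maxHeartbeats 1000000 in
/-- Existence of Nash equilibria in the EWL protocol: for any payoff matrices and any
entanglement parameter γ there is a Nash equilibrium in quantum mixed strategies. -/
theorem stmt_13 (a b : Fin 2 → Fin 2 → ℝ) (γ : ℝ) (hγ : γ ∈ Set.Icc 0 (Real.pi / 2)) :
    ∃ μA μB : ProbabilityMeasure SU2,
      (∀ μ : ProbabilityMeasure SU2, mixedPayoff γ a μ μB ≤ mixedPayoff γ a μA μB) ∧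
      (∀ μ : ProbabilityMeasure SU2, mixedPayoff γ b μA μ ≤ mixedPayoff γ b μA μB) := by
  clear hγ
  set c := Real.cos (γ/2) with hc
  set s := Real.sin (γ/2) with hs
  set AD1 := (c^4+s^4)*a 0 0 + 2*c^2*s^2*a 1 1 with hAD1
  set AD0 := (c^4+s^4)*a 1 0 + 2*c^2*s^2*a 0 1 with hAD0
  set AX1 := (c^4+s^4)*a 0 1 + 2*c^2*s^2*a 1 0 with hAX1
  set AX0 := (c^4+s^4)*a 1 1 + 2*c^2*s^2*a 0 0 with hAX0
  set BD1 := (c^4+s^4)*b 0 0 + 2*c^2*s^2*b 1 1 with hBD1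
  set BD0 := (c^4+s^4)*b 0 1 + 2*c^2*s^2*b 1 0 with hBD0
  set BX1 := (c^4+s^4)*b 1 0 + 2*c^2*s^2*b 0 1 with hBX1
  set BX0 := (c^4+s^4)*b 1 1 + 2*c^2*s^2*b 0 0 with hBX0
  obtain ⟨t, q, ht0, ht1, hq0, hq1, htbr, hqbr⟩ :=
    nash_core (AX1 - AX0) (AD1 - AD0) (BX1 - BX0) (BD1 - BD0)
  -- payoff parameters given opponent's mixture
  set LA1 := q*AD1 + (1-q)*AX1 with hLA1
  set LA0 := q*AD0 + (1-q)*AX0 with hLA0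
  set LB1 := t*BD1 + (1-t)*BX1 with hLB1
  set LB0 := t*BD0 + (1-t)*BX0 with hLB0
  have hμA : IsProbabilityMeasure (mm t) := mm_prob t ht0 ht1
  have hμB : IsProbabilityMeasure (mm q) := mm_prob q hq0 hq1
  refine ⟨⟨mm t, hμA⟩, ⟨mm q, hμB⟩, ?_, ?_⟩
  · -- player A's condition
    have keyA : ∀ U : SU2, (∫ V, ewlPayoff γ a U V ∂(mm q)) =
        tpar U * LA1 + (1 - tpar U) * LA0 := by
      intro U
      rw [integral_mm _ q hq0 hq1]
      have hD := payoffD_raw c s γ hc.symm hs.symm a U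
      have hX := payoffX_raw c s γ hc.symm hs.symm a U
      have h00 : normSq (U.1 0 0) = tpar U := rfl
      obtain ⟨e11, e01, e10⟩ := nsq_entries U
      rw [e11, e01, e10, h00] at hD hX
      rw [hLA1, hLA0, hAD1, hAD0, hAX1, hAX0]
      linear_combination (q/2) * hD + ((1-q)/2) * hX
    have hptA : ∀ U : SU2, tpar U * LA1 + (1 - tpar U) * LA0 ≤ t * LA1 + (1-t) * LA0 := by
      intro U
      obtain ⟨h0, h1⟩ := tpar_mem U
      have hbr := htbr (tpar U) h0 h1
      rw [hLA1, hLA0]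
      nlinarith [hbr]
    have hval : mixedPayoff γ a ⟨mm t, hμA⟩ ⟨mm q, hμB⟩ = t * LA1 + (1-t) * LA0 := by
      show (∫ U, ∫ V, ewlPayoff γ a U V ∂(mm q) ∂(mm t)) = _
      rw [integral_congr_ae (Filter.Eventually.of_forall keyA), integral_mm _ t ht0 ht1,
        tpar_V1, tpar_Vz, tpar_Vx, tpar_Vy]
      ring
    intro μ
    rw [hval]
    show (∫ U, ∫ V, ewlPayoff γ a U V ∂(mm q) ∂(μ : Measure SU2)) ≤ _
    rw [integral_congr_ae (Filter.Eventually.of_forall keyA)]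
    calc (∫ U, tpar U * LA1 + (1 - tpar U) * LA0 ∂(μ : Measure SU2))
        ≤ ∫ _, t * LA1 + (1-t) * LA0 ∂(μ : Measure SU2) :=
          integral_mono (integrable_affine_tpar LA1 LA0 _) (integrable_const _) hptA
      _ = t * LA1 + (1-t) * LA0 := by simp
  · -- player B's condition
    have hI : ∀ (W : SU2) (μ : ProbabilityMeasure SU2),
        Integrable (fun V => ewlPayoff γ b W V) (μ : Measure SU2) := by
      intro W μ
      refine Integrable.mono' (integrable_const (16 * (|b 0 0| + |b 0 1| + |b 1 0| + |b 1 1|)))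
        (meas_right γ b W).aestronglyMeasurable (Filter.Eventually.of_forall fun V => ?_)
      simpa [Real.norm_eq_abs] using ewl_bound γ b W V
    have keyB : ∀ V : SU2, t/2 * ewlPayoff γ b V1 V + t/2 * ewlPayoff γ b Vz V
        + ((1-t)/2 * ewlPayoff γ b Vx V + (1-t)/2 * ewlPayoff γ b Vy V) =
        tpar V * LB1 + (1 - tpar V) * LB0 := by
      intro V
      have hD := payoffDB_raw c s γ hc.symm hs.symm b V
      have hX := payoffXB_raw c s γ hc.symm hs.symm b V
      have h00 : normSq (V.1 0 0) = tpar V := rfl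
      obtain ⟨e11, e01, e10⟩ := nsq_entries V
      rw [e11, e01, e10, h00] at hD hX
      rw [hLB1, hLB0, hBD1, hBD0, hBX1, hBX0]
      linear_combination (t/2) * hD + ((1-t)/2) * hX
    have hsplit : ∀ μ : ProbabilityMeasure SU2, mixedPayoff γ b ⟨mm t, hμA⟩ μ =
        ∫ V, (tpar V * LB1 + (1 - tpar V) * LB0) ∂(μ : Measure SU2) := by
      intro μ
      show (∫ U, ∫ V, ewlPayoff γ b U V ∂(μ : Measure SU2) ∂(mm t)) = _
      rw [integral_mm _ t ht0 ht1]
      rw [← integral_congr_ae (Filter.Eventually.of_forall keyB)]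
      rw [integral_add (f := fun V => t/2 * ewlPayoff γ b V1 V + t/2 * ewlPayoff γ b Vz V)
            (g := fun V => (1-t)/2 * ewlPayoff γ b Vx V + (1-t)/2 * ewlPayoff γ b Vy V)
            (((hI V1 μ).const_mul (t/2)).add ((hI Vz μ).const_mul (t/2)))
            (((hI Vx μ).const_mul ((1-t)/2)).add ((hI Vy μ).const_mul ((1-t)/2))),
          integral_add ((hI V1 μ).const_mul (t/2)) ((hI Vz μ).const_mul (t/2)),
          integral_add ((hI Vx μ).const_mul ((1-t)/2)) ((hI Vy μ).const_mul ((1-t)/2)),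
          integral_const_mul, integral_const_mul, integral_const_mul, integral_const_mul]
    have hptB : ∀ V : SU2, tpar V * LB1 + (1 - tpar V) * LB0 ≤ q * LB1 + (1-q) * LB0 := by
      intro V
      obtain ⟨h0, h1⟩ := tpar_mem V
      have hbr := hqbr (tpar V) h0 h1
      rw [hLB1, hLB0]
      nlinarith [hbr]
    have hval : mixedPayoff γ b ⟨mm t, hμA⟩ ⟨mm q, hμB⟩ = q * LB1 + (1-q) * LB0 := by
      rw [hsplit ⟨mm q, hμB⟩]
      show (∫ V, tpar V * LB1 + (1 - tpar V) * LB0 ∂(mm q)) = _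
      rw [integral_mm _ q hq0 hq1, tpar_V1, tpar_Vz, tpar_Vx, tpar_Vy]
      ring
    intro μ
    rw [hval, hsplit μ]
    calc (∫ V, tpar V * LB1 + (1 - tpar V) * LB0 ∂(μ : Measure SU2))
        ≤ ∫ _, q * LB1 + (1-q) * LB0 ∂(μ : Measure SU2) :=
          integral_mono (integrable_affine_tpar LB1 LB0 _) (integrable_const _) hptB
      _ = q * LB1 + (1-q) * LB0 := by simp
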